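/- If (X,d) is a length metric space, then for every x and t ∈ (0,t_*(x)) the slope of the Hopf-Lax function satisfies |∇⁻ Q_t f|(x) = |∇ Q_t f|(x) = D⁺(x,t)/t, and hence the right time derivative satisfies d⁺/dt Q_t f(x) + |∇ Q_t f|²(x)/2 = 0. -/

import Mathlib

open Filter Topology

/-- `F(t,x,y) = f(y) + d(x,y)²/(2t)`. -/
noncomputable def hopfLaxF {X : Type*} [MetricSpace X] (f : X → ℝ) (t : ℝ) (x y : X) : ℝ :=
  f y + dist x y ^ 2 / (2 * t)

/-- `(y n)` is a minimizing sequence for `F(t,x,·)`, whose infimum value is `Q`. -/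
def IsMinimizingSeq {X : Type*} [MetricSpace X] (f : X → ℝ) (t : ℝ) (x : X) (Q : ℝ)
    (y : ℕ → X) : Prop :=
  Tendsto (fun n => hopfLaxF f t x (y n)) atTop (𝓝 Q)

/-- The descending slope `|∇⁻g|(x) = limsup_{y→x} (g(y)-g(x))⁻/d(y,x)` (set to `0` at
isolated points). -/
noncomputable def descSlope {X : Type*} [MetricSpace X] (g : X → ℝ) (x : X) : EReal :=
  max 0 (Filter.limsup (fun y => ((max (g x - g y) 0 / dist y x : ℝ) : EReal))
    (nhdsWithin x {x}ᶜ))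

/-- The local Lipschitz constant (slope) `|∇g|(x) = limsup_{y→x} |g(y)-g(x)|/d(y,x)`
(set to `0` at isolated points). -/
noncomputable def locSlope {X : Type*} [MetricSpace X] (g : X → ℝ) (x : X) : EReal :=
  max 0 (Filter.limsup (fun y => ((|g y - g x| / dist y x : ℝ) : EReal))
    (nhdsWithin x {x}ᶜ))

/-!
Almost minimizers of `y ↦ F(t,x,y) = f y + d(x,y)²/(2t)` are controlled by `D⁺ = D⁺(x,t)`:
finiteness of `Q` at a later time bounds them a priori, so by the definition of `D⁺` every
sufficiently good almost minimizer lies within `D⁺ + η` of `x`, while arbitrarily good ones lie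
beyond `D⁺ - η`. Testing `Q_t f(z)` and `Q_t f(x)` against a common almost minimizer gives
`|Q_t f(z) - Q_t f(x)| ≤ (D⁺/t + o(1)) d(z,x)`, and testing `Q_s f(x)` against the almost
minimizers for time `t` gives the right derivative `-(D⁺)²/(2t²)`. In a length space one can
step a distance `r` from `x` along an almost geodesic towards a far almost minimizer, which
lowers `Q_t f` by about `r D⁺/t`; so the descending slope is at least `D⁺/t` as well.
-/

open Set

theorem add_sq_div_add_le {a b p q : ℝ} (hp : 0 < p) (hq : 0 < q) :
    (a + b) ^ 2 / (p + q) ≤ a ^ 2 / p + b ^ 2 / q := by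
  rw [div_add_div _ _ hp.ne' hq.ne', div_le_div_iff₀ (by positivity) (by positivity)]
  nlinarith [sq_nonneg (a * q - b * p)]

theorem max_eq_and_max_eq_of_le_of_le_max {α : Type*} [LinearOrder α] {z a b c : α}
    (hab : a ≤ b) (hbc : b ≤ c) (hca : c ≤ max z a) (hzc : z ≤ c) :
    max z a = c ∧ max z b = c :=
  ⟨le_antisymm (max_le hzc (hab.trans hbc)) hca,
    le_antisymm (max_le hzc hbc) (hca.trans (max_le_max le_rfl hab))⟩

theorem tendsto_of_forall_pos_squeeze {α : Type*} {l : Filter α} {u : α → ℝ} {L : ℝ}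
    {g h : ℝ → α → ℝ} {G H : ℝ → ℝ}
    (hG : Tendsto G (𝓝[>] 0) (𝓝 L)) (hH : Tendsto H (𝓝[>] 0) (𝓝 L))
    (hg : ∀ η > 0, Tendsto (g η) l (𝓝 (G η))) (hh : ∀ η > 0, Tendsto (h η) l (𝓝 (H η)))
    (hgu : ∀ η > 0, ∀ᶠ a in l, g η a ≤ u a) (huh : ∀ η > 0, ∀ᶠ a in l, u a ≤ h η a) :
    Tendsto u l (𝓝 L) := by
  refine tendsto_order.2 ⟨fun b hb => ?_, fun b hb => ?_⟩
  · obtain ⟨η, hbG, hη⟩ := ((hG.eventually (lt_mem_nhds hb)).and self_mem_nhdsWithin).exists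
    filter_upwards [(hg η hη).eventually (lt_mem_nhds hbG), hgu η hη] with a h₁ h₂
    exact h₁.trans_le h₂
  · obtain ⟨η, hHb, hη⟩ := ((hH.eventually (gt_mem_nhds hb)).and self_mem_nhdsWithin).exists
    filter_upwards [(hh η hη).eventually (gt_mem_nhds hHb), huh η hη] with a h₁ h₂
    exact h₂.trans_lt h₁

namespace EReal

theorem limsup_coe_le_of_forall_pos {α : Type*} {l : Filter α} {u : α → ℝ} {c : ℝ}
    (h : ∀ ε > 0, ∀ᶠ a in l, u a ≤ c + ε) : limsup (fun a => (u a : EReal)) l ≤ c := by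
  refine le_of_forall_gt_imp_ge_of_dense fun b hb => ?_
  obtain ⟨r, hcr, hrb⟩ := EReal.exists_between_coe_real hb
  have hcr : c < r := EReal.coe_lt_coe_iff.1 hcr
  refine (limsup_le_of_le (by isBoundedDefault) ?_).trans hrb.le
  filter_upwards [h (r - c) (by linarith)] with a ha
  exact EReal.coe_le_coe_iff.2 (by linarith)

theorem coe_le_limsup_of_forall_pos {α : Type*} {l : Filter α} {u : α → ℝ} {c : ℝ}
    (h : ∀ ε > 0, ∃ᶠ a in l, c - ε ≤ u a) : (c : EReal) ≤ limsup (fun a => (u a : EReal)) l := by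
  refine le_of_forall_lt_imp_le_of_dense fun b hb => ?_
  obtain ⟨r, hbr, hrc⟩ := EReal.exists_between_coe_real hb
  have hrc : r < c := EReal.coe_lt_coe_iff.1 hrc
  refine hbr.le.trans (le_limsup_of_frequently_le ?_ (by isBoundedDefault))
  refine (h (c - r) (by linarith)).mono fun a ha => EReal.coe_le_coe_iff.2 (by linarith)

end EReal

def IsLengthSpace (X : Type*) [MetricSpace X] : Prop :=
  ∀ a b : X, ∀ ε > (0 : ℝ), ∃ γ : ℝ → X, ContinuousOn γ (Icc 0 1) ∧
    γ 0 = a ∧ γ 1 = b ∧ eVariationOn γ (Icc 0 1) ≤ ENNReal.ofReal (dist a b + ε)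

theorem IsLengthSpace.exists_dist_eq {X : Type*} [MetricSpace X] (hX : IsLengthSpace X)
    {x y : X} {r δ : ℝ} (hr₀ : 0 ≤ r) (hr : r ≤ dist x y) (hδ : 0 < δ) :
    ∃ z, dist x z = r ∧ dist z y ≤ dist x y - r + δ := by
  obtain ⟨γ, hγ, rfl, rfl, hγδ⟩ := hX x y δ hδ
  have hr' : r ∈ Icc (dist (γ 0) (γ 0)) (dist (γ 0) (γ 1)) := by
    rw [dist_self]
    exact ⟨hr₀, hr⟩
  obtain ⟨u, hu, hur⟩ := intermediate_value_Icc zero_le_one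
    ((continuous_const.dist continuous_id).comp_continuousOn hγ) hr'
  refine ⟨γ u, hur, ?_⟩
  replace hur : dist (γ 0) (γ u) = r := hur
  have hsplit : edist (γ 0) (γ u) + edist (γ u) (γ 1) ≤ ENNReal.ofReal (dist (γ 0) (γ 1) + δ) :=
    calc edist (γ 0) (γ u) + edist (γ u) (γ 1)
        ≤ eVariationOn γ (Icc 0 u) + eVariationOn γ (Icc u 1) :=
          add_le_add (eVariationOn.edist_le γ ⟨le_rfl, hu.1⟩ ⟨hu.1, le_rfl⟩)
            (eVariationOn.edist_le γ ⟨le_rfl, hu.2⟩ ⟨hu.2, le_rfl⟩)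
      _ = eVariationOn γ (Icc 0 1) := by
          simpa using eVariationOn.Icc_add_Icc γ (s := univ) hu.1 hu.2 (mem_univ u)
      _ ≤ _ := hγδ
  rw [edist_dist, edist_dist, ← ENNReal.ofReal_add dist_nonneg dist_nonneg,
    ENNReal.ofReal_le_ofReal_iff (by positivity)] at hsplit
  linarith

section hopfLaxF

variable {X : Type*} [MetricSpace X] (f : X → ℝ)

theorem hopfLaxF_sub_hopfLaxF {t s : ℝ} (ht : t ≠ 0) (hs : s ≠ 0) (x y : X) :
    hopfLaxF f t x y - hopfLaxF f s x y = dist x y ^ 2 * (s - t) / (2 * t * s) := by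
  simp only [hopfLaxF]
  field_simp
  ring

theorem hopfLaxF_antitone {t s : ℝ} (ht : 0 < t) (hts : t ≤ s) (x y : X) :
    hopfLaxF f s x y ≤ hopfLaxF f t x y := by
  simp only [hopfLaxF]
  gcongr

theorem hopfLaxF_le_hopfLaxF_add_dist_mul {t : ℝ} (ht : 0 < t) (x z y : X) :
    hopfLaxF f t z y ≤ hopfLaxF f t x y + dist z x * (2 * dist x y + dist z x) / (2 * t) := by
  have : dist z y ^ 2 ≤ dist x y ^ 2 + dist z x * (2 * dist x y + dist z x) := by
    nlinarith [dist_triangle z x y, dist_nonneg (x := z) (y := y)]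
  simp only [hopfLaxF]
  rw [add_assoc, ← add_div]
  gcongr

theorem hopfLaxF_le_hopfLaxF_add_dist_sq {s s' : ℝ} (hs : 0 < s) (hss' : s < s') (x z y : X) :
    hopfLaxF f s' x y ≤ hopfLaxF f s z y + dist z x ^ 2 / (2 * (s' - s)) := by
  have hxy : dist x y ^ 2 / (2 * s') ≤ (dist z y + dist z x) ^ 2 / (2 * s + 2 * (s' - s)) := by
    rw [show 2 * s + 2 * (s' - s) = 2 * s' by ring]
    gcongr
    · linarith
    · linarith [dist_triangle x z y, dist_comm x z]
  have := add_sq_div_add_le (a := dist z y) (b := dist z x) (by positivity : 0 < 2 * s)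
    (by linarith : 0 < 2 * (s' - s))
  simp only [hopfLaxF]
  linarith

end hopfLaxF

def IsHopfLax {X : Type*} [MetricSpace X] (f : X → ℝ) (Q : ℝ → X → ℝ) (T : ℝ) : Prop :=
  ∀ r ∈ Ioo (0 : ℝ) T, ∀ z : X, IsGLB (range (hopfLaxF f r z)) (Q r z)

/-- `D⁺(x,t)` is the supremum of this set. -/
def minimizingSeqLimsups {X : Type*} [MetricSpace X] (f : X → ℝ) (t : ℝ) (x : X) (q : ℝ) :
    Set ℝ :=
  {L | ∃ y : ℕ → X, IsMinimizingSeq f t x q y ∧ L = atTop.limsup fun n => dist x (y n)}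

theorem exists_hopfLaxF_le_and_lt_dist {X : Type*} [MetricSpace X] {f : X → ℝ} {t : ℝ}
    {x : X} {q Dp : ℝ} (hDp : IsLUB (minimizingSeqLimsups f t x q) Dp) {c σ : ℝ} (hc : c < Dp)
    (hσ : 0 < σ) : ∃ y, hopfLaxF f t x y ≤ q + σ ∧ c < dist x y := by
  obtain ⟨_, ⟨w, hw, rfl⟩, hcw, -⟩ := hDp.exists_between hc
  have hfar : ∃ᶠ n in atTop, c < dist x (w n) :=
    frequently_lt_of_lt_limsup (isCoboundedUnder_le_of_le atTop fun _ => dist_nonneg) hcw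
  obtain ⟨n, hn, hwn⟩ :=
    (hfar.and_eventually (hw.eventually (gt_mem_nhds (lt_add_of_pos_right _ hσ)))).exists
  exact ⟨w n, hwn.le, hn⟩

namespace IsHopfLax

variable {X : Type*} [MetricSpace X] {f : X → ℝ} {Q : ℝ → X → ℝ} {T t : ℝ} {x : X} {Dp : ℝ}

theorem le_hopfLaxF (hQ : IsHopfLax f Q T) {r : ℝ} (hr : r ∈ Ioo 0 T) (z y : X) :
    Q r z ≤ hopfLaxF f r z y :=
  (hQ r hr z).1 ⟨y, rfl⟩

theorem exists_hopfLaxF_le (hQ : IsHopfLax f Q T) {r : ℝ} (hr : r ∈ Ioo 0 T) (z : X) {σ : ℝ}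
    (hσ : 0 < σ) : ∃ y, hopfLaxF f r z y ≤ Q r z + σ := by
  obtain ⟨_, ⟨y, rfl⟩, -, hy⟩ := (hQ r hr z).exists_between (lt_add_of_pos_right _ hσ)
  exact ⟨y, hy.le⟩

theorem antitoneOn (hQ : IsHopfLax f Q T) (x : X) : AntitoneOn (fun r => Q r x) (Ioo 0 T) :=
  fun _ ht _ hs hts => (hQ _ ht x).2 <| forall_mem_range.2 fun y =>
    (hQ.le_hopfLaxF hs x y).trans (hopfLaxF_antitone f ht.1 hts x y)

theorem exists_dist_le_of_hopfLaxF_le (hQ : IsHopfLax f Q T) {s₀ : ℝ} (hs₀ : s₀ ∈ Ioo 0 T)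
    (x : X) (C : ℝ) :
    ∃ M, ∀ s ∈ Ioc 0 s₀, ∀ z, dist z x ≤ 1 → ∀ y, hopfLaxF f s z y ≤ C → dist x y ≤ M := by
  obtain ⟨hs₀, hs₀T⟩ := hs₀
  obtain ⟨s₁, hs₀₁, hs₁T⟩ := exists_between hs₀T
  obtain ⟨s₂, hs₁₂, hs₂T⟩ := exists_between hs₁T
  have hs₁ : 0 < s₁ := hs₀.trans hs₀₁
  have hs₂ : 0 < s₂ := hs₁.trans hs₁₂
  have hk : 0 < (s₂ - s₁) / (2 * s₁ * s₂) := div_pos (by linarith) (by positivity)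
  refine ⟨1 + (C + 1 / (2 * (s₁ - s₀)) - Q s₂ x) / ((s₂ - s₁) / (2 * s₁ * s₂)),
    fun s hs z hz y hy => ?_⟩
  -- Recentring at `x` at the later time `s₁` costs at most `d(z,x)²/(2(s₁-s))`, and
  -- `Q s₂ x > -∞` with `s₁ < s₂` makes `F(s₁, x, ·)` coercive.
  have hshift : hopfLaxF f s₁ x y ≤ C + 1 / (2 * (s₁ - s₀)) := calc
    hopfLaxF f s₁ x y ≤ hopfLaxF f s z y + dist z x ^ 2 / (2 * (s₁ - s)) :=
        hopfLaxF_le_hopfLaxF_add_dist_sq f hs.1 (by linarith [hs.2]) x z y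
    _ ≤ C + 1 / (2 * (s₁ - s₀)) := add_le_add hy <|
        div_le_div₀ zero_le_one (pow_le_one₀ dist_nonneg hz) (by linarith) (by linarith [hs.2])
  have hcoer := hopfLaxF_sub_hopfLaxF f hs₁.ne' hs₂.ne' x y
  have hQ₂ := hQ.le_hopfLaxF ⟨hs₂, hs₂T⟩ x y
  have hsq : dist x y ^ 2 ≤ (C + 1 / (2 * (s₁ - s₀)) - Q s₂ x) / ((s₂ - s₁) / (2 * s₁ * s₂)) := by
    rw [le_div_iff₀ hk]
    linarith [mul_div_assoc (dist x y ^ 2) (s₂ - s₁) (2 * s₁ * s₂)]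
  nlinarith [sq_nonneg (dist x y - 1)]

theorem isMinimizingSeq_of_le (hQ : IsHopfLax f Q T) (ht : t ∈ Ioo 0 T) {y : ℕ → X}
    {σ : ℕ → ℝ} (hσ : Tendsto σ atTop (𝓝 0)) (hy : ∀ n, hopfLaxF f t x (y n) ≤ Q t x + σ n) :
    IsMinimizingSeq f t x (Q t x) y :=
  tendsto_of_tendsto_of_tendsto_of_le_of_le tendsto_const_nhds
    (by simpa using tendsto_const_nhds.add hσ) (fun n => hQ.le_hopfLaxF ht x (y n)) hy

theorem le_of_frequently_le_dist (hQ : IsHopfLax f Q T) (ht : t ∈ Ioo 0 T)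
    (hDp : IsLUB (minimizingSeqLimsups f t x (Q t x)) Dp) {y : ℕ → X}
    (hy : ∀ n : ℕ, hopfLaxF f t x (y n) ≤ Q t x + 1 / (n + 1)) {c : ℝ}
    (hc : ∃ᶠ n in atTop, c ≤ dist x (y n)) : c ≤ Dp := by
  obtain ⟨M, hM⟩ := hQ.exists_dist_le_of_hopfLaxF_le ht x (Q t x + 1)
  have hbdd : IsBoundedUnder (· ≤ ·) atTop fun n => dist x (y n) := by
    refine isBoundedUnder_of ⟨M, fun n => hM t ⟨ht.1, le_rfl⟩ x (by simp) (y n) ?_⟩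
    refine (hy n).trans ?_
    gcongr
    rw [div_le_one (by positivity)]
    simp
  exact (le_limsup_of_frequently_le hc hbdd).trans
    (hDp.1 ⟨y, hQ.isMinimizingSeq_of_le ht tendsto_one_div_add_atTop_nhds_zero_nat hy, rfl⟩)

theorem nonneg_of_isLUB (hQ : IsHopfLax f Q T) (ht : t ∈ Ioo 0 T)
    (hDp : IsLUB (minimizingSeqLimsups f t x (Q t x)) Dp) : 0 ≤ Dp := by
  choose y hy using fun n : ℕ => hQ.exists_hopfLaxF_le ht x (Nat.one_div_pos_of_nat (n := n))
  exact hQ.le_of_frequently_le_dist ht hDp hy (Frequently.of_forall fun _ => dist_nonneg)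

theorem exists_pos_forall_dist_le (hQ : IsHopfLax f Q T) (ht : t ∈ Ioo 0 T)
    (hDp : IsLUB (minimizingSeqLimsups f t x (Q t x)) Dp) {η : ℝ} (hη : 0 < η) :
    ∃ δ > 0, ∀ y, hopfLaxF f t x y ≤ Q t x + δ → dist x y ≤ Dp + η := by
  by_contra! h
  choose y hy hfar using fun n : ℕ => h (1 / (n + 1)) Nat.one_div_pos_of_nat
  linarith [hQ.le_of_frequently_le_dist ht hDp hy (Frequently.of_forall fun n => (hfar n).le)]

theorem sub_le_dist_mul (hQ : IsHopfLax f Q T) (ht : t ∈ Ioo 0 T)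
    (hDp : IsLUB (minimizingSeqLimsups f t x (Q t x)) Dp) {η : ℝ} (hη : 0 < η) (z : X) :
    Q t z - Q t x ≤ dist z x * (2 * (Dp + η) + dist z x) / (2 * t) := by
  obtain ⟨δ, hδ, hnear⟩ := hQ.exists_pos_forall_dist_le ht hDp hη
  rw [sub_le_iff_le_add']
  refine le_of_forall_pos_le_add fun σ hσ => ?_
  obtain ⟨y, hy⟩ := hQ.exists_hopfLaxF_le ht x (lt_min hδ hσ)
  have hxy : dist x y ≤ Dp + η := hnear y (hy.trans (by gcongr; exact min_le_left _ _))
  have hyσ : hopfLaxF f t x y ≤ Q t x + σ := hy.trans (by gcongr; exact min_le_right _ _)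
  have hdist : dist z x * (2 * dist x y + dist z x) / (2 * t)
      ≤ dist z x * (2 * (Dp + η) + dist z x) / (2 * t) := by
    have := ht.1
    gcongr
  linarith [hQ.le_hopfLaxF ht z y, hopfLaxF_le_hopfLaxF_add_dist_mul f ht.1 x z y]

theorem eventually_sub_le_dist_mul (hQ : IsHopfLax f Q T) (ht : t ∈ Ioo 0 T)
    (hDp : IsLUB (minimizingSeqLimsups f t x (Q t x)) Dp) {η : ℝ} (hη : 0 < η) :
    ∀ᶠ z in 𝓝 x, Q t x - Q t z ≤ dist z x * (2 * (Dp + η) + 3 * dist z x) / (2 * t) := by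
  have ht₀ := ht.1
  obtain ⟨δ, hδ, hnear⟩ := hQ.exists_pos_forall_dist_le ht hDp hη
  obtain ⟨M, hM⟩ := hQ.exists_dist_le_of_hopfLaxF_le ht x (Q t x + 1)
  obtain ⟨ρ, hρ₀, hρδ, hρ₁⟩ : ∃ ρ > 0, 3 * ρ ≤ δ ∧ 3 * ρ ≤ 1 :=
    ⟨min δ 1 / 3, by positivity, by linarith [min_le_left δ 1], by linarith [min_le_right δ 1]⟩
  have hsmall : ∀ g : X → ℝ, ContinuousAt g x → g x = 0 → ∀ᶠ z in 𝓝 x, g z < ρ :=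
    fun g hg hgx => hg.eventually_lt continuousAt_const (hgx ▸ hρ₀)
  have hupper : ∀ᶠ z in 𝓝 x, dist z x * (2 * (Dp + η) + dist z x) / (2 * t) < ρ :=
    hsmall _ (by fun_prop) (by simp)
  have hdM : ∀ᶠ z in 𝓝 x, dist z x * ((2 * M + 3) / (2 * t)) < ρ :=
    hsmall _ (by fun_prop) (by simp)
  have hdρ : ∀ᶠ z in 𝓝 x, dist z x < ρ := hsmall _ (by fun_prop) (by simp)
  filter_upwards [hupper, hdM, hdρ] with z hupper hdM hdρ
  have hQz : Q t z < Q t x + ρ := by linarith [hQ.sub_le_dist_mul ht hDp hη z]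
  rw [sub_le_iff_le_add']
  refine le_of_forall_pos_le_add fun σ hσ => ?_
  obtain ⟨y, hy⟩ := hQ.exists_hopfLaxF_le ht z (lt_min hρ₀ hσ)
  have hyρ : hopfLaxF f t z y ≤ Q t z + ρ := hy.trans (by gcongr; exact min_le_left _ _)
  have hyσ : hopfLaxF f t z y ≤ Q t z + σ := hy.trans (by gcongr; exact min_le_right _ _)
  have hyM : dist x y ≤ M := hM t ⟨ht₀, le_rfl⟩ z (by linarith) y (by linarith)
  have hxz := hopfLaxF_le_hopfLaxF_add_dist_mul f ht₀ z x y
  rw [dist_comm x z] at hxz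
  have hzy : dist z y ≤ dist z x + dist x y := dist_triangle z x y
  -- `y` is an almost minimizer for `x` too, since `d(x, y) ≤ M` and `z` is close to `x`.
  have hxδ : hopfLaxF f t x y ≤ Q t x + δ := by
    have : dist z x * (2 * dist z y + dist z x) / (2 * t)
        ≤ dist z x * ((2 * M + 3) / (2 * t)) := by
      rw [mul_div_assoc]
      gcongr dist z x * (?_ / _)
      linarith
    linarith
  have hbound : dist z x * (2 * dist z y + dist z x) / (2 * t)
      ≤ dist z x * (2 * (Dp + η) + 3 * dist z x) / (2 * t) := by
    gcongr dist z x * ?_ / _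
    linarith [hnear y hxδ]
  linarith [hQ.le_hopfLaxF ht x y]

theorem eventually_abs_sub_le (hQ : IsHopfLax f Q T) (ht : t ∈ Ioo 0 T)
    (hDp : IsLUB (minimizingSeqLimsups f t x (Q t x)) Dp) {ε : ℝ} (hε : 0 < ε) :
    ∀ᶠ z in 𝓝 x, |Q t z - Q t x| ≤ (Dp / t + ε) * dist z x := by
  have ht₀ := ht.1
  have hη : 0 < ε * t / 2 := by positivity
  have hclose : ∀ᶠ z in 𝓝 x, dist z x < ε * t / 3 :=
    (by fun_prop : ContinuousAt (fun z => dist z x) x).eventually_lt continuousAt_const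
      (by simp only [dist_self]; positivity)
  filter_upwards [hQ.eventually_sub_le_dist_mul ht hDp hη, hclose] with z hlower hz
  have hupper := hQ.sub_le_dist_mul ht hDp hη z
  have hd := dist_nonneg (x := z) (y := x)
  have hbound : dist z x * (2 * (Dp + ε * t / 2) + 3 * dist z x) / (2 * t)
      ≤ (Dp / t + ε) * dist z x := by
    rw [div_le_iff₀ (by positivity), show (Dp / t + ε) * dist z x * (2 * t)
      = dist z x * (2 * Dp + 2 * ε * t) by field_simp]
    nlinarith
  have hmono : dist z x * (2 * (Dp + ε * t / 2) + dist z x) / (2 * t)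
      ≤ dist z x * (2 * (Dp + ε * t / 2) + 3 * dist z x) / (2 * t) := by
    gcongr
    linarith
  rw [abs_sub_le_iff]
  constructor <;> linarith

theorem frequently_le_sub (hX : IsLengthSpace X) (hQ : IsHopfLax f Q T) (ht : t ∈ Ioo 0 T)
    (hDp : IsLUB (minimizingSeqLimsups f t x (Q t x)) Dp) (hDp₀ : 0 < Dp) {ε : ℝ} (hε : 0 < ε) :
    ∃ᶠ z in 𝓝[≠] x, (Dp / t - ε) * dist z x ≤ Q t x - Q t z := by
  have ht₀ := ht.1
  rw [Filter.frequently_iff]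
  intro U hU
  obtain ⟨ρ, hρ, hsub⟩ := Metric.mem_nhdsWithin_iff.1 hU
  -- Per unit of `r`, stepping a distance `r` towards a far almost minimizer gains at least `g r`.
  set g : ℝ → ℝ := fun r => (1 - r) * (2 * Dp - 3 * r) / (2 * t) - r with hg
  have hg₀ : Dp / t - ε < g 0 := by
    have : g 0 = Dp / t := by
      simp only [hg]
      field_simp
      ring
    linarith
  have hstep : ∀ᶠ r in 𝓝 (0 : ℝ), Dp / t - ε < g r ∧ r < ρ ∧ r < 1 ∧ r < Dp / 2 :=
    ((by fun_prop : Continuous g).continuousAt.eventually (lt_mem_nhds hg₀)).and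
      ((gt_mem_nhds hρ).and ((gt_mem_nhds one_pos).and (gt_mem_nhds (half_pos hDp₀))))
  obtain ⟨r, ⟨hgr, hrρ, hr₁, hrD⟩, hr₀ : 0 < r⟩ :=
    ((hstep.filter_mono (nhdsWithin_le_nhds (s := Ioi 0))).and self_mem_nhdsWithin).exists
  obtain ⟨y, hy, hfar⟩ :=
    exists_hopfLaxF_le_and_lt_dist hDp (sub_lt_self Dp hr₀) (pow_pos hr₀ 2)
  obtain ⟨z, hxz, hzy⟩ := hX.exists_dist_eq hr₀.le (by linarith) (pow_pos hr₀ 2)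
  rw [dist_comm] at hxz
  refine ⟨z, hsub ⟨by rwa [Metric.mem_ball, hxz], fun hzx => ?_⟩, ?_⟩
  · rw [hzx, dist_self] at hxz
    exact hr₀.ne hxz
  have hQz := hQ.le_hopfLaxF ht z y
  simp only [hopfLaxF] at hy hQz
  have hsq : dist z y ^ 2 ≤ (dist x y - r + r ^ 2) ^ 2 := pow_le_pow_left₀ dist_nonneg hzy 2
  have hgain : (1 - r) * (2 * Dp - 3 * r) * r ≤ dist x y ^ 2 - dist z y ^ 2 := by
    nlinarith [mul_le_mul_of_nonneg_left (show 2 * Dp - 3 * r ≤ 2 * dist x y - r + r ^ 2 by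
      nlinarith) (show 0 ≤ r - r ^ 2 by nlinarith)]
  have hgain' : (1 - r) * (2 * Dp - 3 * r) * r / (2 * t)
      ≤ dist x y ^ 2 / (2 * t) - dist z y ^ 2 / (2 * t) := by
    rw [← sub_div]
    gcongr
  have hrg : (Dp / t - ε) * r ≤ r * g r := by
    rw [mul_comm]
    exact mul_le_mul_of_nonneg_left hgr.le hr₀.le
  rw [hxz]
  have : r * g r = (1 - r) * (2 * Dp - 3 * r) * r / (2 * t) - r ^ 2 := by
    simp only [hg]
    ring
  linarith

theorem descSlope_eq_and_locSlope_eq (hX : IsLengthSpace X) (hQ : IsHopfLax f Q T)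
    (ht : t ∈ Ioo 0 T) (hDp : IsLUB (minimizingSeqLimsups f t x (Q t x)) Dp) :
    descSlope (fun z => Q t z) x = ((Dp / t : ℝ) : EReal) ∧
      locSlope (fun z => Q t z) x = ((Dp / t : ℝ) : EReal) := by
  have hDp₀ := hQ.nonneg_of_isLUB ht hDp
  refine max_eq_and_max_eq_of_le_of_le_max ?_ ?_ ?_
    (EReal.coe_nonneg.2 (div_nonneg hDp₀ ht.1.le))
  · refine limsup_le_limsup (Eventually.of_forall fun z => EReal.coe_le_coe_iff.2 ?_)
    refine div_le_div_of_nonneg_right (max_le ?_ (abs_nonneg _)) dist_nonneg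
    rw [abs_sub_comm]
    exact le_abs_self _
  · refine EReal.limsup_coe_le_of_forall_pos fun ε hε => ?_
    filter_upwards [eventually_nhdsWithin_of_eventually_nhds (hQ.eventually_abs_sub_le ht hDp hε),
      self_mem_nhdsWithin] with z hz hzx
    rwa [div_le_iff₀ (dist_pos.2 hzx)]
  · rcases hDp₀.eq_or_lt with rfl | hDp₀
    · simp
    refine (EReal.coe_le_limsup_of_forall_pos fun ε hε => ?_).trans (le_max_right _ _)
    refine (hQ.frequently_le_sub hX ht hDp hDp₀ hε).mp
      (eventually_mem_nhdsWithin.mono fun z hzx hz => ?_)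
    rw [le_div_iff₀ (dist_pos.2 hzx)]
    exact hz.trans (le_max_left _ _)

theorem sub_le_of_mem_Ioo (hQ : IsHopfLax f Q T) (ht : t ∈ Ioo 0 T)
    (hDp : IsLUB (minimizingSeqLimsups f t x (Q t x)) Dp) {η : ℝ} (hη : 0 < η) {s : ℝ}
    (hs : s ∈ Ioo t T) :
    Q s x - Q t x ≤ -((Dp ^ 2 - 2 * Dp * η) * (s - t) / (2 * t * s)) := by
  have ht₀ := ht.1
  have hs₀ : 0 < s := ht₀.trans hs.1
  have hDp₀ := hQ.nonneg_of_isLUB ht hDp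
  rw [sub_le_iff_le_add']
  refine le_of_forall_pos_le_add fun σ hσ => ?_
  obtain ⟨y, hy, hfar⟩ := exists_hopfLaxF_le_and_lt_dist hDp (sub_lt_self Dp hη) hσ
  have hsq : Dp ^ 2 - 2 * Dp * η ≤ dist x y ^ 2 := by
    rcases le_or_gt η Dp with h | h
    · nlinarith
    · nlinarith [sq_nonneg (dist x y)]
  have hgap : (Dp ^ 2 - 2 * Dp * η) * (s - t) / (2 * t * s)
      ≤ dist x y ^ 2 * (s - t) / (2 * t * s) := by
    have := hs.1
    gcongr
  linarith [hQ.le_hopfLaxF ⟨hs₀, hs.2⟩ x y, hopfLaxF_sub_hopfLaxF f ht₀.ne' hs₀.ne' x y]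

theorem eventually_nhdsGT_sub_le (hQ : IsHopfLax f Q T) (ht : t ∈ Ioo 0 T)
    (hDp : IsLUB (minimizingSeqLimsups f t x (Q t x)) Dp) {η : ℝ} (hη : 0 < η) :
    ∀ᶠ s in 𝓝[>] t, Q t x - Q s x ≤ (Dp + η) ^ 2 * (s - t) / (2 * t * s) := by
  have ht₀ := ht.1
  obtain ⟨δ, hδ, hnear⟩ := hQ.exists_pos_forall_dist_le ht hDp hη
  obtain ⟨s₀, hts₀, hs₀T⟩ := exists_between ht.2
  obtain ⟨M, hM⟩ := hQ.exists_dist_le_of_hopfLaxF_le ⟨ht₀.trans hts₀, hs₀T⟩ x (Q t x + 1)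
  have hsmall : ∀ᶠ s in 𝓝 t, M ^ 2 * (s - t) / (2 * t * s) < δ / 2 :=
    (by fun_prop (disch := positivity) : ContinuousAt (fun s => M ^ 2 * (s - t) / (2 * t * s)) t)
      |>.eventually_lt continuousAt_const (by rw [sub_self, mul_zero, zero_div]; positivity)
  filter_upwards [hsmall.filter_mono nhdsWithin_le_nhds, Ioo_mem_nhdsGT hts₀] with s hsM hs
  have hs' : s ∈ Ioo 0 T := ⟨ht₀.trans hs.1, hs.2.trans hs₀T⟩
  rw [sub_le_iff_le_add']
  refine le_of_forall_pos_le_add fun σ hσ => ?_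
  obtain ⟨y, hy⟩ := hQ.exists_hopfLaxF_le hs' x (lt_min hσ (half_pos (lt_min hδ one_pos)))
  have hyσ : hopfLaxF f s x y ≤ Q s x + σ := hy.trans (by gcongr; exact min_le_left _ _)
  have hyδ : hopfLaxF f s x y ≤ Q s x + min δ 1 / 2 := hy.trans (by gcongr; exact min_le_right _ _)
  have hmono : Q s x ≤ Q t x := hQ.antitoneOn x ht hs' hs.1.le
  have hid := hopfLaxF_sub_hopfLaxF f ht₀.ne' hs'.1.ne' x y
  have hst : 0 ≤ s - t := by linarith [hs.1]
  have hyM : dist x y ≤ M := hM s ⟨hs'.1, hs.2.le⟩ x (by simp) y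
    (by linarith [min_le_right δ 1])
  -- `y` is an almost minimizer for time `t` too, since `d(x, y) ≤ M` and `s` is close to `t`.
  have hxy : dist x y ≤ Dp + η := by
    refine hnear y ?_
    have : dist x y ^ 2 * (s - t) / (2 * t * s) ≤ M ^ 2 * (s - t) / (2 * t * s) := by
      have := hs'.1
      gcongr
    linarith [min_le_left δ 1]
  have : dist x y ^ 2 * (s - t) / (2 * t * s) ≤ (Dp + η) ^ 2 * (s - t) / (2 * t * s) := by
    have := hs'.1
    gcongr
  linarith [hQ.le_hopfLaxF ht x y]

theorem hasDerivWithinAt (hQ : IsHopfLax f Q T) (ht : t ∈ Ioo 0 T)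
    (hDp : IsLUB (minimizingSeqLimsups f t x (Q t x)) Dp) :
    HasDerivWithinAt (fun r => Q r x) (-(Dp ^ 2 / (2 * t ^ 2))) (Ici t) t := by
  have ht₀ := ht.1
  rw [← hasDerivWithinAt_Ioi_iff_Ici,
    hasDerivWithinAt_iff_tendsto_slope' (s := Ioi t) (lt_irrefl t)]
  have hlim : ∀ c : ℝ, Tendsto (fun s => -(c / (2 * t * s))) (𝓝[>] t) (𝓝 (-(c / (2 * t ^ 2)))) :=
    fun c => by
      have : ContinuousAt (fun s => -(c / (2 * t * s))) t := by fun_prop (disch := positivity)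
      simpa [sq, mul_assoc] using this.tendsto.mono_left nhdsWithin_le_nhds
  refine tendsto_of_forall_pos_squeeze (g := fun η s => -((Dp + η) ^ 2 / (2 * t * s)))
    (h := fun η s => -((Dp ^ 2 - 2 * Dp * η) / (2 * t * s)))
    (G := fun η => -((Dp + η) ^ 2 / (2 * t ^ 2)))
    (H := fun η => -((Dp ^ 2 - 2 * Dp * η) / (2 * t ^ 2))) ?_ ?_
    (fun _ _ => hlim _) (fun _ _ => hlim _) (fun η hη => ?_) (fun η hη => ?_)
  · simpa using ((by fun_prop : Continuous fun η => -((Dp + η) ^ 2 / (2 * t ^ 2))).tendsto 0)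
      |>.mono_left nhdsWithin_le_nhds
  · simpa using
      ((by fun_prop : Continuous fun η => -((Dp ^ 2 - 2 * Dp * η) / (2 * t ^ 2))).tendsto 0)
        |>.mono_left nhdsWithin_le_nhds
  · filter_upwards [hQ.eventually_nhdsGT_sub_le ht hDp hη, self_mem_nhdsWithin]
      with s hs (hts : t < s)
    rw [slope_def_field, le_div_iff₀ (sub_pos.2 hts)]
    have : -((Dp + η) ^ 2 / (2 * t * s)) * (s - t) = -((Dp + η) ^ 2 * (s - t) / (2 * t * s)) := by
      ring
    linarith
  · filter_upwards [Ioo_mem_nhdsGT ht.2] with s hs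
    rw [slope_def_field, div_le_iff₀ (sub_pos.2 hs.1)]
    have : -((Dp ^ 2 - 2 * Dp * η) / (2 * t * s)) * (s - t)
        = -((Dp ^ 2 - 2 * Dp * η) * (s - t) / (2 * t * s)) := by
      ring
    linarith [hQ.sub_le_of_mem_Ioo ht hDp hη hs]

end IsHopfLax

/-- In a length space, the Hopf-Lax formula gives solutions of the Hamilton-Jacobi
equation: `|∇⁻ Q_t f|(x) = |∇ Q_t f|(x) = D⁺(x,t)/t`, and the right time derivative
satisfies `d⁺/dt Q_t f(x) + |∇ Q_t f|²(x)/2 = 0`. The length-space property is encoded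
by the existence of curves of length arbitrarily close to the distance. -/
theorem hopfLax_HJ_supersolution_length_space {X : Type*} [MetricSpace X]
    (hlen : ∀ a b : X, ∀ ε > (0 : ℝ), ∃ γ : ℝ → X, ContinuousOn γ (Set.Icc 0 1) ∧
      γ 0 = a ∧ γ 1 = b ∧ eVariationOn γ (Set.Icc 0 1) ≤ ENNReal.ofReal (dist a b + ε))
    (f : X → ℝ) (Q : ℝ → X → ℝ) (T : ℝ)
    (hQ : ∀ r ∈ Set.Ioo (0 : ℝ) T, ∀ z : X, IsGLB (Set.range (hopfLaxF f r z)) (Q r z))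
    (x : X) (t : ℝ) (htT : t ∈ Set.Ioo (0 : ℝ) T) (Dp : ℝ)
    (hDp : IsLUB {L : ℝ | ∃ y : ℕ → X, IsMinimizingSeq f t x (Q t x) y ∧
      L = atTop.limsup fun n => dist x (y n)} Dp) :
    descSlope (fun z => Q t z) x = ((Dp / t : ℝ) : EReal) ∧
    locSlope (fun z => Q t z) x = ((Dp / t : ℝ) : EReal) ∧
    ∃ D : ℝ, HasDerivWithinAt (fun r => Q r x) D (Set.Ici t) t ∧
      (D : EReal) + (locSlope (fun z => Q t z) x) ^ 2 / 2 = 0 := by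
  obtain ⟨hdesc, hloc⟩ := IsHopfLax.descSlope_eq_and_locSlope_eq hlen hQ htT hDp
  refine ⟨hdesc, hloc, _, IsHopfLax.hasDerivWithinAt hQ htT hDp, ?_⟩
  rw [hloc, ← EReal.coe_pow, show (2 : EReal) = ((2 : ℝ) : EReal) from rfl, ← EReal.coe_div,
    ← EReal.coe_add, EReal.coe_eq_zero]
  field_simp
  ring
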